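/- For the softened n-body Hamiltonian H in D spatial dimensions with equal masses m_i = m > 0 for all i, the centre-of-mass angular momentum R^{COM}_{d d'}(q, p) = (q_COM)_d (p_COM)_{d'} − (q_COM)_{d'} (p_COM)_d, where q_COM = (1/n) ∑_{i=1}^n q_i and p_COM = (1/n) ∑_{i=1}^n p_i, is a conserved quantity for each 1 ≤ d < d' ≤ D: {R^{COM}_{d d'}, H}(q, p) = 0 for all (q, p) ∈ ℝ^(2nD). -/

import Mathlib

open scoped BigOperators

/-!
The observable is `f (Q, P)` with `Q = ∑ᵢ qᵢ`, `P = ∑ᵢ pᵢ` and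
`f (a, b) = (a_d b_{d'} - a_{d'} b_d) / N²`, so its gradient in every `qᵢ` (resp. `pᵢ`) is the
same vector `∂ₐf` (resp. `∂_b f`). Hence `{R, H} = ⟪∂ₐf, ∑ᵢ ∂H/∂pᵢ⟫ - ⟪∂_b f, ∑ᵢ ∂H/∂qᵢ⟫`.
The total force `∑ᵢ ∂H/∂qᵢ` vanishes because `H` is invariant under a common translation of all
positions, and with equal masses `∑ᵢ ∂H/∂pᵢ = P / m`; finally `⟪∂ₐf, P⟫ = 0` because the shear
`(a, b) ↦ (a + t b, b)` preserves `f`.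
-/

/-- Partial derivative of `F` with respect to the position coordinate `q_{i,d}`
on the n-body phase space `(Fin N → Fin D → ℝ) × (Fin N → Fin D → ℝ)`. -/
noncomputable def pderivQ {N D : ℕ}
    (F : (Fin N → Fin D → ℝ) × (Fin N → Fin D → ℝ) → ℝ)
    (x : (Fin N → Fin D → ℝ) × (Fin N → Fin D → ℝ)) (i : Fin N) (d : Fin D) : ℝ :=
  deriv (fun t => F (Function.update x.1 i (Function.update (x.1 i) d t), x.2)) (x.1 i d)

/-- Partial derivative of `F` with respect to the momentum coordinate `p_{i,d}`. -/
noncomputable def pderivP {N D : ℕ}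
    (F : (Fin N → Fin D → ℝ) × (Fin N → Fin D → ℝ) → ℝ)
    (x : (Fin N → Fin D → ℝ) × (Fin N → Fin D → ℝ)) (i : Fin N) (d : Fin D) : ℝ :=
  deriv (fun t => F (x.1, Function.update x.2 i (Function.update (x.2 i) d t))) (x.2 i d)

/-- Poisson bracket on the n-body phase space:
`{F, G}(x) = ∑_{i,d} (∂F/∂q_{i,d} ∂G/∂p_{i,d} − ∂F/∂p_{i,d} ∂G/∂q_{i,d})`. -/
noncomputable def poisson {N D : ℕ}
    (F G : (Fin N → Fin D → ℝ) × (Fin N → Fin D → ℝ) → ℝ)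
    (x : (Fin N → Fin D → ℝ) × (Fin N → Fin D → ℝ)) : ℝ :=
  ∑ i, ∑ d, (pderivQ F x i d * pderivP G x i d - pderivP F x i d * pderivQ G x i d)

/-- The softened n-body Hamiltonian in D spatial dimensions:
`H(q, p) = ∑ i ‖p_i‖²/(2 m_i) + ∑_{i ≠ j} G m_i m_j / √(‖q_i − q_j‖² + ε²)`. -/
noncomputable def nbodyH {N D : ℕ} (m : Fin N → ℝ) (G ε : ℝ)
    (x : (Fin N → Fin D → ℝ) × (Fin N → Fin D → ℝ)) : ℝ :=
  (∑ i, (∑ d, (x.2 i d) ^ 2) / (2 * m i)) +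
    ∑ i, ∑ j, if i ≠ j then
      G * m i * m j / Real.sqrt ((∑ d, (x.1 i d - x.1 j d) ^ 2) + ε ^ 2)
    else 0

abbrev PhaseSpace (N D : ℕ) := (Fin N → Fin D → ℝ) × (Fin N → Fin D → ℝ)

theorem hasDerivAt_update_update {ι κ : Type*} [Fintype ι] [DecidableEq ι] [Fintype κ]
    [DecidableEq κ] (f : ι → κ → ℝ) (i : ι) (e : κ) (t : ℝ) :
    HasDerivAt (fun s : ℝ => Function.update f i (Function.update (f i) e s))
      (Pi.single i (Pi.single e 1)) t := by
  have h := (hasFDerivAt_update f (i := i) _).comp_hasDerivAt t (hasDerivAt_update (f i) e t)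
  refine h.congr_deriv ?_
  ext j : 1
  rcases eq_or_ne j i with rfl | h <;> simp [*]

theorem HasFDerivAt.apply_eq_zero_of_forall_add_smul {𝕜 E F : Type*}
    [NontriviallyNormedField 𝕜] [NormedAddCommGroup E] [NormedSpace 𝕜 E] [NormedAddCommGroup F]
    [NormedSpace 𝕜 F] {f : E → F} {f' : E →L[𝕜] F} {x v : E} (h : HasFDerivAt f f' x)
    (hv : ∀ t : 𝕜, f (x + t • v) = f x) : f' v = 0 := by
  have := h.hasLineDerivAt v
  simp only [HasLineDerivAt, hv] at this
  exact this.unique (hasDerivAt_const _ _)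

theorem ContinuousLinearMap.sum_apply_single_fst_mul {ι Y : Type*} [Fintype ι] [DecidableEq ι]
    [NormedAddCommGroup Y] [NormedSpace ℝ Y] (φ : (ι → ℝ) × Y →L[ℝ] ℝ) (c : ι → ℝ) :
    ∑ e, φ (Pi.single e 1, 0) * c e = φ (c, 0) := by
  have hc : (c, (0 : Y)) = ∑ e, c e • ((Pi.single e 1 : ι → ℝ), (0 : Y)) := by
    conv_lhs => rw [pi_eq_sum_univ' c]
    ext <;> simp [Prod.fst_sum, Prod.snd_sum]
  rw [hc, map_sum]
  simp_rw [map_smul, smul_eq_mul, mul_comm]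

section PhaseSpace

variable {N D : ℕ}

theorem HasFDerivAt.pderivQ_eq {F : PhaseSpace N D → ℝ} {F' : PhaseSpace N D →L[ℝ] ℝ}
    {x : PhaseSpace N D} (h : HasFDerivAt F F' x) (i : Fin N) (e : Fin D) :
    pderivQ F x i e = F' (Pi.single i (Pi.single e 1), 0) :=
  (h.comp_hasDerivAt_of_eq _ ((hasDerivAt_update_update x.1 i e _).prodMk
    (hasDerivAt_const _ x.2)) (by simp)).deriv

theorem HasFDerivAt.pderivP_eq {F : PhaseSpace N D → ℝ} {F' : PhaseSpace N D →L[ℝ] ℝ}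
    {x : PhaseSpace N D} (h : HasFDerivAt F F' x) (i : Fin N) (e : Fin D) :
    pderivP F x i e = F' (0, Pi.single i (Pi.single e 1)) :=
  (h.comp_hasDerivAt_of_eq _ ((hasDerivAt_const _ x.1).prodMk
    (hasDerivAt_update_update x.2 i e _)) (by simp)).deriv

def total : PhaseSpace N D →L[ℝ] (Fin D → ℝ) × (Fin D → ℝ) :=
  (∑ i, ContinuousLinearMap.proj i ∘L ContinuousLinearMap.fst ℝ _ _).prod
    (∑ i, ContinuousLinearMap.proj i ∘L ContinuousLinearMap.snd ℝ _ _)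

@[simp]
theorem total_apply (x : PhaseSpace N D) : total x = (∑ i, x.1 i, ∑ i, x.2 i) := by
  ext <;> simp [total]

def TranslationInvariant (G : PhaseSpace N D → ℝ) : Prop :=
  ∀ (q p : Fin N → Fin D → ℝ) (v : Fin D → ℝ), G (q + fun _ => v, p) = G (q, p)

theorem sum_pderivQ_eq_zero_of_translationInvariant {G : PhaseSpace N D → ℝ}
    {G' : PhaseSpace N D →L[ℝ] ℝ} {x : PhaseSpace N D} (hG : HasFDerivAt G G' x)
    (hinv : TranslationInvariant G) (e : Fin D) :
    ∑ i, pderivQ G x i e = 0 := by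
  have hsum : ∑ i, ((Pi.single i (Pi.single e 1) : Fin N → Fin D → ℝ), (0 : Fin N → Fin D → ℝ))
      = (fun _ => Pi.single e 1, 0) := by
    ext : 1
    · exact (Prod.fst_sum ..).trans (Finset.univ_sum_single fun _ => Pi.single e 1)
    · simp [Prod.snd_sum]
  simp_rw [hG.pderivQ_eq, ← map_sum, hsum]
  refine hG.apply_eq_zero_of_forall_add_smul fun t => ?_
  have hline : x + t • ((fun _ => Pi.single e 1, 0) : PhaseSpace N D)
      = (x.1 + fun _ => t • Pi.single e 1, x.2) := by
    ext <;> simp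
  rw [hline, hinv]

theorem poisson_comp_total_of_translationInvariant {f : (Fin D → ℝ) × (Fin D → ℝ) → ℝ}
    {f' : (Fin D → ℝ) × (Fin D → ℝ) →L[ℝ] ℝ} {G : PhaseSpace N D → ℝ}
    {G' : PhaseSpace N D →L[ℝ] ℝ} {x : PhaseSpace N D} (hf : HasFDerivAt f f' (total x))
    (hG : HasFDerivAt G G' x) (hinv : TranslationInvariant G) :
    poisson (fun y => f (total y)) G x = f' (fun e => ∑ i, pderivP G x i e, 0) := by
  have hF : HasFDerivAt (fun y => f (total y)) (f'.comp total) x :=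
    hf.comp x total.hasFDerivAt
  simp only [poisson]
  simp_rw [hF.pderivQ_eq, hF.pderivP_eq]
  simp only [ContinuousLinearMap.comp_apply, total_apply, Finset.sum_pi_single', Finset.mem_univ,
    if_true, Pi.zero_apply, Finset.sum_const_zero, Finset.sum_sub_distrib]
  rw [Finset.sum_comm, Finset.sum_comm (γ := Fin N)]
  simp_rw [← Finset.mul_sum, sum_pderivQ_eq_zero_of_translationInvariant hG hinv, mul_zero,
    Finset.sum_const_zero, sub_zero]
  exact f'.sum_apply_single_fst_mul _

theorem nbodyH_translationInvariant (m : Fin N → ℝ) (G ε : ℝ) :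
    TranslationInvariant (nbodyH (D := D) m G ε) := by
  intro q p v
  simp [nbodyH]

theorem differentiable_nbodyH (m : Fin N → ℝ) (G : ℝ) {ε : ℝ} (hε : ε ≠ 0) :
    Differentiable ℝ (nbodyH (D := D) m G ε) := by
  unfold nbodyH
  refine Differentiable.add (by fun_prop) (Differentiable.fun_sum fun i _ =>
    Differentiable.fun_sum fun j _ => ?_)
  have hpos (x : PhaseSpace N D) : 0 < (∑ d, (x.1 i d - x.1 j d) ^ 2) + ε ^ 2 := by positivity
  split_ifs
  · simp_rw [div_eq_mul_inv]
    exact (Differentiable.sqrt (by fun_prop) fun x => (hpos x).ne').inv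
      (fun x => (Real.sqrt_pos.2 (hpos x)).ne') |>.const_mul _
  · fun_prop

theorem pderivP_nbodyH (m : Fin N → ℝ) (G ε : ℝ) (x : PhaseSpace N D) (i : Fin N) (e : Fin D) :
    pderivP (nbodyH m G ε) x i e = x.2 i e / m i := by
  set u := fun t : ℝ => Function.update x.2 i (Function.update (x.2 i) e t)
  have hu (i' : Fin N) (e' : Fin D) :
      HasDerivAt (fun t => u t i' e') ((Pi.single i (Pi.single e 1) : Fin N → Fin D → ℝ) i' e')
        (x.2 i e) :=
    hasDerivAt_pi.1 (hasDerivAt_pi.1 (hasDerivAt_update_update x.2 i e _) i') e'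
  have hK := HasDerivAt.fun_sum (u := Finset.univ) fun i' _ =>
    (HasDerivAt.fun_sum (u := Finset.univ) fun e' _ => (hu i' e').fun_pow 2).div_const (2 * m i')
  simp only [pderivP, nbodyH]
  refine ((hK.add_const _).congr_deriv ?_).deriv
  rw [Finset.sum_eq_single i (fun j _ hj => by simp [hj]) (by simp)]
  simp [u, Pi.single_apply, mul_div_mul_left]

end PhaseSpace

theorem com_angular_momentum_conserved_general {N D : ℕ} (m : ℝ)
    (G ε : ℝ) (hε : 0 < ε) (d d' : Fin D) :
    ∀ x : (Fin N → Fin D → ℝ) × (Fin N → Fin D → ℝ),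
      poisson
        (fun y =>
          ((∑ i, y.1 i d) / N) * ((∑ i, y.2 i d') / N) -
          ((∑ i, y.1 i d') / N) * ((∑ i, y.2 i d) / N))
        (nbodyH (fun _ => m) G ε) x = 0 := by
  intro x
  set f : (Fin D → ℝ) × (Fin D → ℝ) → ℝ :=
    fun z => (z.1 d / N) * (z.2 d' / N) - (z.1 d' / N) * (z.2 d / N)
  have hf : HasFDerivAt f (fderiv ℝ f (total x)) (total x) :=
    (show Differentiable ℝ f by fun_prop) _ |>.hasFDerivAt
  have hH := (differentiable_nbodyH (fun _ => m) G hε.ne' x).hasFDerivAt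
  have hR : (fun y : PhaseSpace N D =>
      ((∑ i, y.1 i d) / N) * ((∑ i, y.2 i d') / N) -
        ((∑ i, y.1 i d') / N) * ((∑ i, y.2 i d) / N)) = fun y => f (total y) := by
    funext y
    simp [f, Finset.sum_apply]
  rw [hR, poisson_comp_total_of_translationInvariant hf hH (nbodyH_translationInvariant _ _ _)]
  simp_rw [pderivP_nbodyH]
  refine hf.apply_eq_zero_of_forall_add_smul fun t => ?_
  simp only [f, total_apply, ← Finset.sum_div, Prod.smul_mk, smul_zero, Prod.mk_add_mk, add_zero,
    Pi.add_apply, Finset.sum_apply, Pi.smul_apply, smul_eq_mul]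
  ring

/-- With equal masses, the centre-of-mass angular momentum
`R^COM_{d d'}(q, p) = (q_COM)_d (p_COM)_{d'} − (q_COM)_{d'} (p_COM)_d`, where
`q_COM = (1/n) ∑ i q_i` and `p_COM = (1/n) ∑ i p_i`, is a conserved quantity of
the softened n-body Hamiltonian: `{R^COM_{d d'}, H} = 0` everywhere. -/
theorem com_angular_momentum_conserved {N D : ℕ} (m : ℝ) (hm : 0 < m)
    (G ε : ℝ) (hG : 0 < G) (hε : 0 < ε) (d d' : Fin D) (hdd' : d < d') :
    ∀ x : (Fin N → Fin D → ℝ) × (Fin N → Fin D → ℝ),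
      poisson
        (fun y =>
          ((∑ i, y.1 i d) / N) * ((∑ i, y.2 i d') / N) -
          ((∑ i, y.1 i d') / N) * ((∑ i, y.2 i d) / N))
        (nbodyH (fun _ => m) G ε) x = 0 :=
  com_angular_momentum_conserved_general m G ε hε d d'
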